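/- arXiv:2501.03668 — 2 statements merged into one kernel-verified Lean document; each statement's English description precedes it below -/
import Mathlib

section
/- For every state s ∈ S, the expected total discounted reward satisfies v(s) = r(s) + Σ_{s'∈S} r(s') · E_s[λ^{τ_{s'}}] / (1 − E_{s'}[λ^{τ_{s'}}]). (The denominators are nonzero, since τ_{s'} ≥ 1 implies E_{s'}[λ^{τ_{s'}}] ≤ λ < 1.) -/
open MeasureTheory Filter Topology

namespace MDPHitting

open scoped Classical

/-- `λ^{τ_{s'}}(ω)`, where `τ_{s'} = inf{t ≥ 1 : ω t = s'}`, with the convention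
`λ^∞ = 0`. -/
noncomputable def hitGeom {S : Type*} (lam : ℝ) (s' : S) (ω : ℕ → S) : ℝ :=
  if h : ∃ t : ℕ, 1 ≤ t ∧ ω t = s' then lam ^ Nat.find h else 0

/-- The cylinder-set characterization of the law of the time-homogeneous Markov
chain with transition matrix `P` started at `s`. -/
def IsMarkovLaw {S : Type*} [MeasurableSpace S]
    (P : S → S → ℝ) (μ : S → Measure (ℕ → S)) : Prop :=
  (∀ s : S, IsProbabilityMeasure (μ s)) ∧
  ∀ (s : S) (t : ℕ) (x : ℕ → S),
    (μ s {ω : ℕ → S | ∀ k ≤ t, ω k = x k}).toReal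
      = (if x 0 = s then (1 : ℝ) else 0) *
          ∏ k ∈ Finset.range t, P (x k) (x (k + 1))

noncomputable section

set_option linter.unusedSectionVars false

variable {S : Type*} [Fintype S] [Nonempty S] [DecidableEq S]

/-- extension of a finite path to an infinite one -/
def exte {t : ℕ} (x : Fin (t + 1) → S) : ℕ → S := fun k => x ⟨min k t, by omega⟩

/-- weight of a path (product of transition probabilities) -/
def Wprod (P : S → S → ℝ) {t : ℕ} (x : Fin (t + 1) → S) : ℝ :=
  ∏ i : Fin t, P (x i.castSucc) (x i.succ)

def W (P : S → S → ℝ) (s : S) {t : ℕ} (x : Fin (t + 1) → S) : ℝ :=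
  (if x 0 = s then 1 else 0) * Wprod P x

/-- probability of being at s' at time t, starting from s -/
def q (P : S → S → ℝ) (s : S) (t : ℕ) (s' : S) : ℝ :=
  ∑ x : Fin (t + 1) → S, if exte x t = s' then W P s x else 0

/-- first-hit condition at time u -/
def cond (s' : S) (u : ℕ) (ω : ℕ → S) : Prop :=
  ω u = s' ∧ ∀ k : ℕ, 1 ≤ k → k < u → ω k ≠ s'

/-- probability that the first hit of s' (at time ≥ 1) is exactly at time u -/
def fhit (P : S → S → ℝ) (s s' : S) (u : ℕ) : ℝ :=
  ∑ x : Fin (u + 1) → S, if cond s' u (exte x) then W P s x else 0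

lemma exte_le {t : ℕ} (x : Fin (t + 1) → S) {k : ℕ} (hk : k ≤ t) :
    exte x k = x ⟨k, by omega⟩ := by
  simp [exte, Nat.min_eq_left hk]

lemma exte_last {t : ℕ} (x : Fin (t + 1) → S) : exte x t = x (Fin.last t) := by
  rw [exte_le x le_rfl]; rfl

lemma exte_zero {t : ℕ} (x : Fin (t + 1) → S) : exte x 0 = x 0 := by
  rw [exte_le x (Nat.zero_le t)]; rfl

lemma cond_congr {s' : S} {u : ℕ} {ω ω' : ℕ → S} (h : ∀ k ≤ u, ω k = ω' k) :
    cond s' u ω ↔ cond s' u ω' := by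
  unfold cond
  constructor
  · rintro ⟨h1, h2⟩
    refine ⟨(h u le_rfl).symm.trans h1, fun k hk1 hk2 hne => ?_⟩
    exact h2 k hk1 hk2 ((h k (le_of_lt hk2)).trans hne)
  · rintro ⟨h1, h2⟩
    refine ⟨(h u le_rfl).trans h1, fun k hk1 hk2 hne => ?_⟩
    exact h2 k hk1 hk2 ((h k (le_of_lt hk2)).symm.trans hne)

section Equivs

/-- cons equivalence -/
def consE (n : ℕ) : S × (Fin (n + 1) → S) ≃ (Fin (n + 2) → S) where
  toFun p := Fin.cons p.1 p.2
  invFun x := (x 0, Fin.tail x)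
  left_inv p := by simp [Fin.tail_cons]
  right_inv x := by simp [Fin.cons_self_tail]

/-- snoc equivalence -/
def snocE (n : ℕ) : (Fin (n + 1) → S) × S ≃ (Fin (n + 2) → S) where
  toFun p := Fin.snoc p.1 p.2
  invFun x := (Fin.init x, x (Fin.last _))
  left_inv p := by simp [Fin.init_snoc, Fin.snoc_last]
  right_inv x := by simp [Fin.snoc_init_self]

lemma sum_cons (n : ℕ) (F : (Fin (n + 2) → S) → ℝ) :
    ∑ x : Fin (n + 2) → S, F x = ∑ a : S, ∑ y : Fin (n + 1) → S, F (Fin.cons a y) := by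
  rw [← Equiv.sum_comp (consE n) F, Fintype.sum_prod_type]
  rfl

lemma sum_snoc (n : ℕ) (F : (Fin (n + 2) → S) → ℝ) :
    ∑ x : Fin (n + 2) → S, F x = ∑ y : Fin (n + 1) → S, ∑ b : S, F (Fin.snoc y b) := by
  rw [← Equiv.sum_comp (snocE n) F, Fintype.sum_prod_type]
  rfl

end Equivs

@[simp] lemma snoc_of_lt {n : ℕ} (x : Fin (n + 1) → S) (b : S) (j : Fin (n + 2)) (h : (j : ℕ) < n + 1) :
    (Fin.snoc x b : Fin (n+2) → S) j = x ⟨j, h⟩ := by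
  simp [Fin.snoc, h]
  rfl

lemma Wprod_snoc (P : S → S → ℝ) {n : ℕ} (x : Fin (n + 1) → S) (b : S) :
    Wprod P (Fin.snoc x b) = Wprod P x * P (x (Fin.last n)) b := by
  unfold Wprod
  rw [Fin.prod_univ_castSucc]
  congr 1
  · apply Finset.prod_congr rfl
    intro i _
    rw [Fin.snoc_castSucc, Fin.succ_castSucc, Fin.snoc_castSucc]
  · rw [Fin.snoc_castSucc, Fin.succ_last, Fin.snoc_last]

lemma W_snoc (P : S → S → ℝ) (s : S) {n : ℕ} (x : Fin (n + 1) → S) (b : S) :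
    W P s (Fin.snoc x b) = W P s x * P (x (Fin.last n)) b := by
  unfold W
  rw [Wprod_snoc]
  have h0 : (Fin.snoc x b : Fin (n+2) → S) 0 = x 0 := by
    rw [snoc_of_lt x b 0 (by simp)]; rfl
  rw [h0]; ring

lemma Wprod_cons (P : S → S → ℝ) {n : ℕ} (a : S) (y : Fin (n + 1) → S) :
    Wprod P (Fin.cons a y) = P a (y 0) * Wprod P y := by
  unfold Wprod
  rw [Fin.prod_univ_succ]
  simp [← Fin.succ_castSucc, Fin.cons_succ, Fin.cons_zero, Fin.castSucc_zero]

lemma W_cons (P : S → S → ℝ) (s : S) {n : ℕ} (a : S) (y : Fin (n + 1) → S) :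
    W P s (Fin.cons a y) = (if a = s then 1 else 0) * (P a (y 0) * Wprod P y) := by
  unfold W
  rw [Wprod_cons, Fin.cons_zero]





-- exte/cons lemmas
lemma exte_cons_zero {t : ℕ} (a : S) (y : Fin (t + 1) → S) :
    exte (Fin.cons a y : Fin (t + 2) → S) 0 = a := by
  rw [exte_zero, Fin.cons_zero]

lemma exte_cons_succ {t : ℕ} (a : S) (y : Fin (t + 1) → S) (k : ℕ) :
    exte (Fin.cons a y : Fin (t + 2) → S) (k + 1) = exte y k := by
  unfold exte
  have h : (⟨min (k + 1) (t + 1), by omega⟩ : Fin (t + 2))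
      = (⟨min k t, by omega⟩ : Fin (t + 1)).succ := by
    ext; simp [Nat.succ_min_succ]
  rw [h, Fin.cons_succ]

variable {P : S → S → ℝ}

lemma Wprod_nonneg (hP0 : ∀ s s' : S, 0 ≤ P s s') {t : ℕ} (x : Fin (t + 1) → S) :
    0 ≤ Wprod P x :=
  Finset.prod_nonneg fun _ _ => hP0 _ _

lemma W_nonneg (hP0 : ∀ s s' : S, 0 ≤ P s s') (s : S) {t : ℕ} (x : Fin (t + 1) → S) :
    0 ≤ W P s x := by
  unfold W
  have := Wprod_nonneg hP0 (P := P) x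
  split_ifs <;> simp [this]

lemma q_zero (s s' : S) : q P s 0 s' = if s = s' then 1 else 0 := by
  unfold q
  rw [← Equiv.sum_comp (Equiv.funUnique (Fin 1) S).symm]
  have : ∀ a : S, ((Equiv.funUnique (Fin 1) S).symm a : Fin 1 → S) = fun _ => a := fun a => rfl
  simp only [this]
  have he : ∀ a : S, exte (fun _ => a : Fin 1 → S) 0 = a := fun a => by rw [exte_zero]
  simp only [he]
  unfold W Wprod
  simp only [Finset.univ_eq_empty, Finset.prod_empty, mul_one]
  rw [Finset.sum_congr rfl (fun a _ => by
    show (if a = s' then (if a = s then (1:ℝ) else 0) else 0) = if a = s' then (if s' = s then (1:ℝ) else 0) else 0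
    split_ifs with h1 h2 h3 <;> simp_all)]
  rw [Finset.sum_ite_eq' Finset.univ s' (fun _ => if s' = s then (1:ℝ) else 0)]
  simp [eq_comm]

lemma q_succ (s : S) (t : ℕ) (s' : S) :
    q P s (t + 1) s' = ∑ a : S, P s a * q P a t s' := by
  have key : ∀ (a : S) (y : Fin (t + 1) → S),
      exte (Fin.cons a y : Fin (t + 2) → S) (t + 1) = y (Fin.last t) := by
    intro a y
    rw [exte_last, ← Fin.succ_last, Fin.cons_succ]
  have lhs : q P s (t + 1) s'
      = ∑ y : Fin (t + 1) → S, (if y (Fin.last t) = s' then P s (y 0) * Wprod P y else 0) := by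
    unfold q
    rw [sum_cons, Finset.sum_comm]
    apply Finset.sum_congr rfl
    intro y _
    calc ∑ a : S, (if exte (Fin.cons a y : Fin (t + 2) → S) (t + 1) = s'
              then W P s (Fin.cons a y) else 0)
        = ∑ a : S, (if a = s then (if y (Fin.last t) = s' then P a (y 0) * Wprod P y else 0)
              else 0) := by
          apply Finset.sum_congr rfl
          intro a _
          rw [key, W_cons]
          split_ifs <;> ring
      _ = if y (Fin.last t) = s' then P s (y 0) * Wprod P y else 0 := by
          rw [Finset.sum_ite_eq' Finset.univ s
            (fun a => if y (Fin.last t) = s' then P a (y 0) * Wprod P y else 0)]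
          simp
  have rhs : ∑ a : S, P s a * q P a t s'
      = ∑ y : Fin (t + 1) → S, (if y (Fin.last t) = s' then P s (y 0) * Wprod P y else 0) := by
    unfold q
    simp_rw [Finset.mul_sum]
    rw [Finset.sum_comm]
    apply Finset.sum_congr rfl
    intro y _
    calc ∑ a : S, P s a * (if exte y t = s' then W P a y else 0)
        = ∑ a : S, (if y 0 = a then (if y (Fin.last t) = s' then P s a * Wprod P y else 0) else 0) := by
          apply Finset.sum_congr rfl
          intro a _
          rw [exte_last]
          unfold W
          split_ifs <;> simp_all <;> ring
      _ = if y (Fin.last t) = s' then P s (y 0) * Wprod P y else 0 := by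
          rw [Finset.sum_ite_eq Finset.univ (y 0)
            (fun a => if y (Fin.last t) = s' then P s a * Wprod P y else 0)]
          simp
  rw [lhs, rhs]

variable (hP0 : ∀ s s' : S, 0 ≤ P s s') (hP1 : ∀ s : S, ∑ s' : S, P s s' = 1)

include hP1 in
lemma sum_q_eq_one (s : S) (t : ℕ) : ∑ s' : S, q P s t s' = 1 := by
  induction t generalizing s with
  | zero =>
      simp only [q_zero]
      rw [Finset.sum_ite_eq Finset.univ s (fun _ => (1:ℝ))]
      simp
  | succ t ih =>
      simp only [q_succ]
      rw [Finset.sum_comm]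
      calc ∑ a : S, ∑ s' : S, P s a * q P a t s'
          = ∑ a : S, P s a * ∑ s' : S, q P a t s' := by
            apply Finset.sum_congr rfl; intro a _; rw [Finset.mul_sum]
        _ = 1 := by simp only [ih]; simp [hP1 s]

include hP1 in
lemma Wsum (s : S) (t : ℕ) : ∑ x : Fin (t + 1) → S, W P s x = 1 := by
  have : ∀ x : Fin (t + 1) → S, W P s x = ∑ s' : S, (if exte x t = s' then W P s x else 0) := by
    intro x
    rw [Finset.sum_ite_eq Finset.univ (exte x t) (fun _ => W P s x)]
    simp
  calc ∑ x : Fin (t + 1) → S, W P s x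
      = ∑ x : Fin (t + 1) → S, ∑ s' : S, (if exte x t = s' then W P s x else 0) := by
        exact Finset.sum_congr rfl fun x _ => this x
    _ = ∑ s' : S, q P s t s' := by rw [Finset.sum_comm]; rfl
    _ = 1 := sum_q_eq_one hP1 s t

include hP0 in
lemma q_nonneg (s : S) (t : ℕ) (s' : S) : 0 ≤ q P s t s' := by
  apply Finset.sum_nonneg
  intro x _
  have := W_nonneg hP0 (P := P) s x
  split_ifs <;> simp [this]

include hP0 hP1 in
lemma q_le_one (s : S) (t : ℕ) (s' : S) : q P s t s' ≤ 1 := by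
  rw [← sum_q_eq_one hP1 s t]
  exact Finset.single_le_sum (fun a _ => q_nonneg hP0 s t a) (Finset.mem_univ s')





include hP0 in
lemma fhit_nonneg (s s' : S) (u : ℕ) : 0 ≤ fhit P s s' u := by
  apply Finset.sum_nonneg
  intro x _
  have := W_nonneg hP0 (P := P) s x
  split_ifs <;> simp [this]

lemma cond_one {s' : S} {ω : ℕ → S} : cond s' 1 ω ↔ ω 1 = s' := by
  unfold cond
  refine ⟨fun h => h.1, fun h => ⟨h, fun k h1 h2 => by omega⟩⟩

lemma fhit_one (s s' : S) : fhit P s s' 1 = P s s' := by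
  unfold fhit
  rw [sum_cons 0]
  have hc : ∀ (a : S) (y : Fin 1 → S),
      cond s' 1 (exte (Fin.cons a y : Fin 2 → S)) ↔ y 0 = s' := by
    intro a y
    rw [cond_one]
    have e : exte (Fin.cons a y : Fin 2 → S) 1 = y 0 := by
      have := exte_cons_succ a y 0
      rwa [exte_zero] at this
    rw [e]
  calc ∑ a : S, ∑ y : Fin 1 → S, (if cond s' 1 (exte (Fin.cons a y : Fin 2 → S))
          then W P s (Fin.cons a y) else 0)
      = ∑ a : S, ∑ y : Fin 1 → S,
          (if a = s then (if y 0 = s' then P a (y 0) * Wprod P y else 0) else 0) := by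
        apply Finset.sum_congr rfl; intro a _
        apply Finset.sum_congr rfl; intro y _
        rw [W_cons]
        by_cases h1 : cond s' 1 (exte (Fin.cons a y : Fin 2 → S)) <;>
          [have h2 := (hc a y).mp h1; have h2 := fun hh => h1 ((hc a y).mpr hh)] <;>
          split_ifs <;> simp_all <;> ring
    _ = ∑ y : Fin 1 → S, (if y 0 = s' then P s (y 0) * Wprod P y else 0) := by
        rw [Finset.sum_comm]
        apply Finset.sum_congr rfl; intro y _
        rw [Finset.sum_ite_eq' Finset.univ s (fun a => if y 0 = s' then P a (y 0) * Wprod P y else 0)]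
        simp
    _ = P s s' := by
        rw [← Equiv.sum_comp (Equiv.funUnique (Fin 1) S).symm]
        have : ∀ a : S, ((Equiv.funUnique (Fin 1) S).symm a : Fin 1 → S) = fun _ => a := fun a => rfl
        simp only [this]
        unfold Wprod
        simp only [Finset.univ_eq_empty, Finset.prod_empty, mul_one]
        rw [Finset.sum_ite_eq' Finset.univ s' (fun a => P s a)]
        simp

lemma cond_cons {s' : S} {u : ℕ} (hu : 1 ≤ u) (a : S) (y : Fin (u + 1) → S) :
    cond s' (u + 1) (exte (Fin.cons a y : Fin (u + 2) → S))
      ↔ (y 0 ≠ s' ∧ cond s' u (exte y)) := by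
  unfold cond
  constructor
  · rintro ⟨h1, h2⟩
    rw [exte_cons_succ] at h1
    refine ⟨?_, h1, fun k hk1 hk2 => ?_⟩
    · have e : exte (Fin.cons a y : Fin (u + 2) → S) 1 = y 0 := by
        have := exte_cons_succ a y 0
        rwa [exte_zero] at this
      have := h2 1 le_rfl (by omega)
      rwa [e] at this
    · have := h2 (k + 1) (by omega) (by omega)
      rwa [exte_cons_succ] at this
  · rintro ⟨h0, h1, h2⟩
    rw [exte_cons_succ]
    refine ⟨h1, fun k hk1 hk2 => ?_⟩
    obtain ⟨j, rfl⟩ : ∃ j, k = j + 1 := ⟨k - 1, by omega⟩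
    rw [exte_cons_succ]
    rcases Nat.eq_zero_or_pos j with hj | hj
    · subst hj; rwa [exte_zero]
    · exact h2 j hj (by omega)

lemma fhit_succ (s s' : S) {u : ℕ} (hu : 1 ≤ u) :
    fhit P s s' (u + 1) = ∑ a : S, (if a = s' then 0 else P s a * fhit P a s' u) := by
  have lhs : fhit P s s' (u + 1)
      = ∑ y : Fin (u + 1) → S,
          (if y 0 ≠ s' ∧ cond s' u (exte y) then P s (y 0) * Wprod P y else 0) := by
    unfold fhit
    rw [sum_cons u, Finset.sum_comm]
    apply Finset.sum_congr rfl; intro y _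
    calc ∑ a : S, (if cond s' (u + 1) (exte (Fin.cons a y : Fin (u + 2) → S))
            then W P s (Fin.cons a y) else 0)
        = ∑ a : S, (if a = s
            then (if y 0 ≠ s' ∧ cond s' u (exte y) then P a (y 0) * Wprod P y else 0) else 0) := by
          apply Finset.sum_congr rfl; intro a _
          rw [W_cons]
          by_cases h1 : cond s' (u + 1) (exte (Fin.cons a y : Fin (u + 2) → S)) <;>
            [have h2 := (cond_cons hu a y).mp h1;
             have h2 := fun hh => h1 ((cond_cons hu a y).mpr hh)] <;>
            split_ifs <;> simp_all <;> ring
      _ = if y 0 ≠ s' ∧ cond s' u (exte y) then P s (y 0) * Wprod P y else 0 := by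
          rw [Finset.sum_ite_eq' Finset.univ s
            (fun a => if y 0 ≠ s' ∧ cond s' u (exte y) then P a (y 0) * Wprod P y else 0)]
          simp
  have rhs : ∑ a : S, (if a = s' then 0 else P s a * fhit P a s' u)
      = ∑ y : Fin (u + 1) → S,
          (if y 0 ≠ s' ∧ cond s' u (exte y) then P s (y 0) * Wprod P y else 0) := by
    unfold fhit
    calc ∑ a : S, (if a = s' then 0 else P s a * ∑ y : Fin (u+1) → S, (if cond s' u (exte y) then W P a y else 0))
        = ∑ a : S, ∑ y : Fin (u+1) → S, (if y 0 = a then (if a ≠ s' ∧ cond s' u (exte y) then P s a * Wprod P y else 0) else 0) := by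
          apply Finset.sum_congr rfl; intro a _
          by_cases ha : a = s'
          · rw [if_pos ha]
            symm; apply Finset.sum_eq_zero; intro y _
            simp [ha]
          · rw [if_neg ha, Finset.mul_sum]
            apply Finset.sum_congr rfl; intro y _
            unfold W
            split_ifs <;> simp_all <;> ring
      _ = ∑ y : Fin (u + 1) → S, (if y 0 ≠ s' ∧ cond s' u (exte y) then P s (y 0) * Wprod P y else 0) := by
          rw [Finset.sum_comm]
          apply Finset.sum_congr rfl; intro y _
          rw [Finset.sum_ite_eq Finset.univ (y 0)
            (fun a => if a ≠ s' ∧ cond s' u (exte y) then P s a * Wprod P y else 0)]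
          simp
  rw [lhs, rhs]


lemma sum_Icc_shift (g : ℕ → ℝ) (t : ℕ) :
    ∑ u ∈ Finset.Icc 1 (t + 1), g u = g 1 + ∑ u ∈ Finset.Icc 1 t, g (u + 1) := by
  rw [← Finset.Ico_add_one_right_eq_Icc, ← Finset.Ico_add_one_right_eq_Icc,
    Finset.sum_Ico_eq_sum_range, Finset.sum_Ico_eq_sum_range]
  simp only [Nat.add_sub_cancel_left, Nat.succ_sub_one, Nat.add_sub_cancel]
  rw [Finset.sum_range_succ']
  have h0 : g (1 + 0) = g 1 := by norm_num
  rw [h0, add_comm]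
  congr 1

include hP1 in
lemma first_passage (s' : S) : ∀ t : ℕ, 1 ≤ t → ∀ s : S,
    q P s t s' = ∑ u ∈ Finset.Icc 1 t, fhit P s s' u * q P s' (t - u) s' := by
  intro t
  induction t with
  | zero => omega
  | succ t ih =>
    intro _ s
    rcases Nat.eq_zero_or_pos t with ht | ht
    · subst ht
      rw [q_succ]
      simp only [Finset.Icc_self, Finset.sum_singleton]
      rw [fhit_one, Nat.sub_self, q_zero, if_pos rfl, mul_one]
      calc ∑ a : S, P s a * q P a 0 s'
          = ∑ a : S, (if a = s' then P s a else 0) := by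
            apply Finset.sum_congr rfl; intro a _
            rw [q_zero]
            split_ifs <;> simp_all
        _ = P s s' := by
            rw [Finset.sum_ite_eq' Finset.univ s' (fun a => P s a)]
            simp
    · have ih' : ∀ a : S, q P a t s' = ∑ u ∈ Finset.Icc 1 t, fhit P a s' u * q P s' (t - u) s' :=
        fun a => ih ht a
      rw [q_succ]
      have splitL : ∑ a : S, P s a * q P a t s'
          = P s s' * q P s' t s'
            + ∑ a : S, (if a = s' then 0 else P s a * q P a t s') := by
        rw [show P s s' * q P s' t s' = ∑ a : S, (if a = s' then P s a * q P a t s' else 0) by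
          rw [Finset.sum_ite_eq' Finset.univ s' (fun a => P s a * q P a t s')]; simp]
        rw [← Finset.sum_add_distrib]
        apply Finset.sum_congr rfl; intro a _
        split_ifs <;> ring
      rw [splitL]
      rw [sum_Icc_shift (fun u => fhit P s s' u * q P s' (t + 1 - u) s') t]
      have e1 : fhit P s s' 1 * q P s' (t + 1 - 1) s' = P s s' * q P s' t s' := by
        rw [fhit_one, Nat.add_sub_cancel]
      rw [e1]
      congr 1
      calc ∑ a : S, (if a = s' then 0 else P s a * q P a t s')
          = ∑ a : S, (if a = s' then 0
              else ∑ u ∈ Finset.Icc 1 t, P s a * fhit P a s' u * q P s' (t - u) s') := by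
            apply Finset.sum_congr rfl; intro a _
            split_ifs with h
            · rfl
            · rw [ih' a, Finset.mul_sum]
              apply Finset.sum_congr rfl; intro u _; ring
        _ = ∑ a : S, ∑ u ∈ Finset.Icc 1 t,
              (if a = s' then 0 else P s a * fhit P a s' u * q P s' (t - u) s') := by
            apply Finset.sum_congr rfl; intro a _
            split_ifs with h
            · simp
            · rfl
        _ = ∑ u ∈ Finset.Icc 1 t, ∑ a : S,
              (if a = s' then 0 else P s a * fhit P a s' u * q P s' (t - u) s') := Finset.sum_comm
        _ = ∑ u ∈ Finset.Icc 1 t, fhit P s s' (u + 1) * q P s' (t + 1 - (u + 1)) s' := by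
            apply Finset.sum_congr rfl; intro u hu
            have hu1 : 1 ≤ u := (Finset.mem_Icc.mp hu).1
            rw [fhit_succ s s' hu1, show t + 1 - (u + 1) = t - u from by omega, Finset.sum_mul]
            apply Finset.sum_congr rfl; intro a _
            split_ifs
            · simp
            · ring


lemma exte_prefix {u N : ℕ} (huN : u ≤ N) (x : Fin (N + 1) → S) {k : ℕ} (hk : k ≤ u) :
    exte (fun i : Fin (u + 1) => x (Fin.castLE (Nat.add_le_add_right huN 1) i)) k = exte x k := by
  rw [exte_le _ hk, exte_le x (hk.trans huN)]
  rfl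

include hP1 in
lemma sum_prefix (s : S) {u : ℕ} : ∀ {N : ℕ} (huN : u ≤ N) (G : (Fin (u + 1) → S) → ℝ),
    ∑ x : Fin (N + 1) → S, G (fun i => x (Fin.castLE (Nat.add_le_add_right huN 1) i)) * W P s x
      = ∑ y : Fin (u + 1) → S, G y * W P s y := by
  intro N
  induction N with
  | zero =>
    intro hu G
    interval_cases u
    apply Finset.sum_congr rfl
    intro x _
    congr 1
  | succ N ih =>
    intro hu G
    rcases Nat.lt_or_ge u (N + 1) with hu' | hu'
    · have hu'' : u ≤ N := by omega
      rw [sum_snoc N]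
      have step : ∀ y : Fin (N + 1) → S,
          ∑ b : S, G (fun i => (Fin.snoc y b : Fin (N + 2) → S) (Fin.castLE (Nat.add_le_add_right hu 1) i))
              * W P s (Fin.snoc y b)
            = G (fun i => y (Fin.castLE (Nat.add_le_add_right hu'' 1) i)) * W P s y := by
        intro y
        have hpre : ∀ b : S, (fun i : Fin (u+1) => (Fin.snoc y b : Fin (N + 2) → S) (Fin.castLE (Nat.add_le_add_right hu 1) i))
            = fun i : Fin (u+1) => y (Fin.castLE (Nat.add_le_add_right hu'' 1) i) := by
          intro b
          funext i
          rw [snoc_of_lt y b _ (by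
            have h2 : (i : ℕ) < u + 1 := i.2
            simp only [Fin.coe_castLE]
            omega)]
          rfl
        calc ∑ b : S, G (fun i => (Fin.snoc y b : Fin (N + 2) → S) (Fin.castLE (Nat.add_le_add_right hu 1) i))
                * W P s (Fin.snoc y b)
            = ∑ b : S, G (fun i => y (Fin.castLE (Nat.add_le_add_right hu'' 1) i))
                * (W P s y * P (y (Fin.last N)) b) := by
              apply Finset.sum_congr rfl; intro b _
              rw [hpre b, W_snoc]
          _ = G (fun i => y (Fin.castLE (Nat.add_le_add_right hu'' 1) i)) * W P s y := by
              rw [← Finset.mul_sum, ← Finset.mul_sum, hP1]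
              ring
      rw [Finset.sum_congr rfl (fun y _ => step y)]
      exact ih hu'' G
    · have huN : u = N + 1 := by omega
      subst huN
      apply Finset.sum_congr rfl
      intro x _
      congr 1

include hP0 hP1 in
lemma fhit_eq_long (s s' : S) {u N : ℕ} (hu1 : 1 ≤ u) (huN : u ≤ N) :
    fhit P s s' u = ∑ x : Fin (N + 1) → S, (if cond s' u (exte x) then W P s x else 0) := by
  have key := sum_prefix hP1 s huN (fun y : Fin (u+1) → S => if cond s' u (exte y) then (1:ℝ) else 0)
  calc fhit P s s' u
      = ∑ y : Fin (u + 1) → S, (if cond s' u (exte y) then (1:ℝ) else 0) * W P s y := by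
        unfold fhit
        apply Finset.sum_congr rfl; intro y _
        split_ifs <;> ring
    _ = ∑ x : Fin (N + 1) → S,
          (if cond s' u (exte (fun i : Fin (u+1) => x (Fin.castLE (Nat.add_le_add_right huN 1) i)))
            then (1:ℝ) else 0) * W P s x := key.symm
    _ = ∑ x : Fin (N + 1) → S, (if cond s' u (exte x) then W P s x else 0) := by
        apply Finset.sum_congr rfl
        intro x _
        have hcond : cond s' u (exte (fun i : Fin (u+1) => x (Fin.castLE (Nat.add_le_add_right huN 1) i)))
            ↔ cond s' u (exte x) :=
          cond_congr (fun k hk => exte_prefix huN x hk)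
        by_cases h : cond s' u (exte x)
        · rw [if_pos (hcond.mpr h), if_pos h, one_mul]
        · rw [if_neg (fun hh => h (hcond.mp hh)), if_neg h, zero_mul]

omit [Fintype S] [Nonempty S] [DecidableEq S] in
lemma cond_unique {s' : S} {ω : ℕ → S} {u v : ℕ} (hu : 1 ≤ u) (hv : 1 ≤ v)
    (hcu : cond s' u ω) (hcv : cond s' v ω) : u = v := by
  by_contra hne
  rcases Nat.lt_or_ge u v with h | h
  · exact hcv.2 u hu h hcu.1
  · exact hcu.2 v hv (by omega) hcv.1

include hP0 hP1 in
lemma fhit_partial_le_one (s s' : S) (N : ℕ) :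
    ∑ u ∈ Finset.Icc 1 N, fhit P s s' u ≤ 1 := by
  have expand : ∑ u ∈ Finset.Icc 1 N, fhit P s s' u
      = ∑ x : Fin (N + 1) → S,
          (∑ u ∈ Finset.Icc 1 N, (if cond s' u (exte x) then (1:ℝ) else 0)) * W P s x := by
    rw [Finset.sum_congr rfl (fun u hu => fhit_eq_long hP0 hP1 s s'
      (Finset.mem_Icc.mp hu).1 (Finset.mem_Icc.mp hu).2 (N := N))]
    rw [Finset.sum_comm]
    apply Finset.sum_congr rfl
    intro x _
    rw [Finset.sum_mul]
    apply Finset.sum_congr rfl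
    intro u _
    split_ifs <;> ring
  rw [expand]
  calc ∑ x : Fin (N + 1) → S,
        (∑ u ∈ Finset.Icc 1 N, (if cond s' u (exte x) then (1:ℝ) else 0)) * W P s x
      ≤ ∑ x : Fin (N + 1) → S, 1 * W P s x := by
        apply Finset.sum_le_sum
        intro x _
        apply mul_le_mul_of_nonneg_right _ (W_nonneg hP0 s x)
        -- at most one u satisfies cond
        by_cases hex : ∃ u ∈ Finset.Icc 1 N, cond s' u (exte x)
        · obtain ⟨u0, hu0, hc0⟩ := hex
          have : ∀ u ∈ Finset.Icc 1 N, (if cond s' u (exte x) then (1:ℝ) else 0)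
              = if u = u0 then 1 else 0 := by
            intro u hu
            by_cases hc : cond s' u (exte x)
            · rw [if_pos hc, if_pos (cond_unique (Finset.mem_Icc.mp hu).1
                (Finset.mem_Icc.mp hu0).1 hc hc0)]
            · rw [if_neg hc, if_neg (fun he => hc (by rw [he]; exact hc0))]
          rw [Finset.sum_congr rfl this, Finset.sum_ite_eq' (Finset.Icc 1 N) u0 (fun _ => (1:ℝ))]
          split_ifs <;> norm_num
        · push_neg at hex
          rw [Finset.sum_congr rfl (fun u hu => if_neg (hex u hu))]
          simp
    _ = 1 := by
        simp only [one_mul]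
        exact Wsum hP1 s N


/-! ### Measure-theoretic layer -/

section Measures

variable [MeasurableSpace S]

variable {μ : S → Measure (ℕ → S)} (hμ : IsMarkovLaw P μ)

include hμ in
lemma meas_cyl (s : S) {t : ℕ} (x : Fin (t + 1) → S) :
    (μ s {ω : ℕ → S | ∀ k ≤ t, ω k = exte x k}).toReal = W P s x := by
  rw [hμ.2 s t (exte x), exte_zero]
  unfold W Wprod
  congr 1
  · by_cases h : x 0 = s <;> simp [h]
  rw [← Fin.prod_univ_eq_prod_range (fun k => P (exte x k) (exte x (k + 1))) t]
  apply Finset.prod_congr rfl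
  intro i _
  have e1 : exte x (i : ℕ) = x i.castSucc := by
    rw [exte_le x (by omega : (i : ℕ) ≤ t)]
    apply congrArg x
    ext
    simp
  have e2 : exte x ((i : ℕ) + 1) = x i.succ := by
    rw [exte_le x (by omega : (i : ℕ) + 1 ≤ t)]
    apply congrArg x
    ext
    simp
  rw [e1, e2]

include hμ hP0 hP1 in
lemma integral_coord_det (s : S) (t : ℕ) (f : (ℕ → S) → ℝ)
    (hf : ∀ ω ω' : ℕ → S, (∀ k ≤ t, ω k = ω' k) → f ω = f ω') :
    Integrable f (μ s) ∧
      ∫ ω, f ω ∂(μ s) = ∑ x : Fin (t + 1) → S, f (exte x) * W P s x := by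
  haveI : IsProbabilityMeasure (μ s) := hμ.1 s
  set A : (Fin (t + 1) → S) → Set (ℕ → S) :=
    fun x => {ω : ℕ → S | ∀ k ≤ t, ω k = exte x k} with hA_def
  have hAmeas : ∀ x, (μ s (A x)).toReal = W P s x := fun x => meas_cyl hμ s x
  have hcover : ∀ ω : ℕ → S, ω ∈ A (fun i : Fin (t + 1) => ω (i : ℕ)) := by
    intro ω k hk
    show ω k = exte (fun i : Fin (t + 1) => ω (i : ℕ)) k
    rw [exte_le _ hk]
  have hdisj : ∀ (x y : Fin (t + 1) → S) (ω : ℕ → S), ω ∈ A x → ω ∈ A y → x = y := by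
    intro x y ω hx hy
    funext i
    have h1 := hx (i : ℕ) (by omega)
    have h2 := hy (i : ℕ) (by omega)
    rw [exte_le x (by omega)] at h1
    rw [exte_le y (by omega)] at h2
    have hx' : x ⟨(i : ℕ), by omega⟩ = x i := congrArg x (Fin.ext rfl)
    have hy' : y ⟨(i : ℕ), by omega⟩ = y i := congrArg y (Fin.ext rfl)
    rw [hx'] at h1
    rw [hy'] at h2
    rw [← h1, ← h2]
  set B : (Fin (t + 1) → S) → Set (ℕ → S) := fun x => toMeasurable (μ s) (A x) with hB_def
  have hBmeas : ∀ x, MeasurableSet (B x) := fun x => measurableSet_toMeasurable _ _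
  have hBA : ∀ x, A x ⊆ B x := fun x => subset_toMeasurable _ _
  have hB : ∀ x, (μ s (B x)).toReal = W P s x := fun x => by
    rw [hB_def]
    simp only [measure_toMeasurable]
    exact hAmeas x
  -- pairwise intersections are null
  have hint : ∀ x y : Fin (t + 1) → S, x ≠ y → μ s (B x ∩ B y) = 0 := by
    intro x y hxy
    set T := (Finset.univ.erase x).erase y with hT_def
    have hsub : ∀ ω : ℕ → S, ω ∉ A x ∪ A y → ω ∈ ⋃ z ∈ T, A z := by
      intro ω hω
      set z := fun i : Fin (t + 1) => ω (i : ℕ) with hz_def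
      have hz : ω ∈ A z := hcover ω
      have hzx : z ≠ x := fun he => hω (Or.inl (he ▸ hz))
      have hzy : z ≠ y := fun he => hω (Or.inr (he ▸ hz))
      exact Set.mem_biUnion (Finset.mem_erase.mpr ⟨hzy, Finset.mem_erase.mpr ⟨hzx, Finset.mem_univ z⟩⟩) hz
    have e1 : μ s Set.univ ≤ μ s (B x ∪ B y) + ∑ z ∈ T, μ s (A z) := by
      calc μ s Set.univ ≤ μ s ((B x ∪ B y) ∪ ⋃ z ∈ T, A z) := by
            apply measure_mono
            intro ω _
            by_cases h : ω ∈ A x ∪ A y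
            · rcases h with h | h
              · exact Or.inl (Or.inl (hBA x h))
              · exact Or.inl (Or.inr (hBA y h))
            · exact Or.inr (hsub ω h)
        _ ≤ μ s (B x ∪ B y) + μ s (⋃ z ∈ T, A z) := measure_union_le _ _
        _ ≤ μ s (B x ∪ B y) + ∑ z ∈ T, μ s (A z) := by
            exact add_le_add le_rfl (measure_biUnion_finset_le (μ := μ s) T A)
    have hsum_ne : (∑ z ∈ T, μ s (A z)) ≠ ⊤ :=
      (ENNReal.sum_lt_top.mpr (fun z _ => (measure_lt_top _ _))).ne
    have h1 : (1 : ℝ) ≤ (μ s (B x ∪ B y)).toReal + ∑ z ∈ T, W P s z := by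
      have hne : μ s (B x ∪ B y) + ∑ z ∈ T, μ s (A z) ≠ ⊤ :=
        ENNReal.add_ne_top.mpr ⟨measure_ne_top _ _, hsum_ne⟩
      have h2 := ENNReal.toReal_mono hne e1
      rw [measure_univ, ENNReal.toReal_one,
        ENNReal.toReal_add (measure_ne_top _ _) hsum_ne,
        ENNReal.toReal_sum (fun z _ => measure_ne_top _ _)] at h2
      calc (1 : ℝ) ≤ (μ s (B x ∪ B y)).toReal + ∑ z ∈ T, (μ s (A z)).toReal := h2
        _ = (μ s (B x ∪ B y)).toReal + ∑ z ∈ T, W P s z := by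
            congr 1
            exact Finset.sum_congr rfl fun z _ => hAmeas z
    have h2 : (μ s (B x ∪ B y)).toReal + (μ s (B x ∩ B y)).toReal = W P s x + W P s y := by
      have h3 := measure_union_add_inter (μ := μ s) (B x) (hBmeas y)
      have h4 := congrArg ENNReal.toReal h3
      rw [ENNReal.toReal_add (measure_ne_top _ _) (measure_ne_top _ _),
        ENNReal.toReal_add (measure_ne_top _ _) (measure_ne_top _ _)] at h4
      rw [h4, hB x, hB y]
    have hWsumT : W P s x + W P s y + ∑ z ∈ T, W P s z = 1 := by
      have hy_mem : y ∈ Finset.univ.erase x := Finset.mem_erase.mpr ⟨fun h => hxy h.symm, Finset.mem_univ y⟩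
      have e2 : W P s y + ∑ z ∈ T, W P s z = ∑ z ∈ Finset.univ.erase x, W P s z :=
        Finset.add_sum_erase _ _ hy_mem
      have e3 : W P s x + ∑ z ∈ Finset.univ.erase x, W P s z = ∑ z : Fin (t + 1) → S, W P s z :=
        Finset.add_sum_erase _ _ (Finset.mem_univ x)
      rw [add_assoc, e2, e3]
      exact Wsum hP1 s t
    have hI_nonneg : 0 ≤ (μ s (B x ∩ B y)).toReal := ENNReal.toReal_nonneg
    have hI_zero : (μ s (B x ∩ B y)).toReal = 0 := by linarith
    exact (ENNReal.toReal_eq_zero_iff _).mp hI_zero |>.resolve_right (measure_ne_top _ _)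
  -- the null "overlap" set
  set E : Set (ℕ → S) :=
    ⋃ (x : Fin (t + 1) → S), ⋃ (y : Fin (t + 1) → S), ⋃ (_ : x ≠ y), B x ∩ B y with hE_def
  have hE : μ s E = 0 := by
    apply measure_iUnion_null
    intro x
    apply measure_iUnion_null
    intro y
    apply measure_iUnion_null
    intro hxy
    exact hint x y hxy
  set g : (ℕ → S) → ℝ :=
    fun ω => ∑ x : Fin (t + 1) → S, Set.indicator (B x) (fun _ => f (exte x)) ω with hg_def
  have hfg : ∀ ω : ℕ → S, ω ∉ E → f ω = g ω := by
    intro ω hω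
    set x₀ := fun i : Fin (t + 1) => ω (i : ℕ) with hx₀_def
    have hx₀ : ω ∈ A x₀ := hcover ω
    have hval : f ω = f (exte x₀) := hf ω (exte x₀) (fun k hk => hx₀ k hk)
    have hg_val : g ω = f (exte x₀) := by
      show (∑ x : Fin (t + 1) → S, Set.indicator (B x) (fun _ => f (exte x)) ω) = f (exte x₀)
      rw [Finset.sum_eq_single x₀]
      · exact Set.indicator_of_mem (hBA x₀ hx₀) _
      · intro y _ hy
        apply Set.indicator_of_notMem
        intro hmem
        apply hω
        rw [hE_def]
        exact Set.mem_iUnion.mpr ⟨x₀, Set.mem_iUnion.mpr ⟨y, Set.mem_iUnion.mpr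
          ⟨fun h => hy h.symm, ⟨hBA x₀ hx₀, hmem⟩⟩⟩⟩
      · intro h
        exact absurd (Finset.mem_univ x₀) h
    rw [hval, hg_val]
  have hae : f =ᵐ[μ s] g := by
    apply (MeasureTheory.ae_iff).mpr
    apply measure_mono_null (fun ω hω => ?_) hE
    by_contra hcon
    exact hω (hfg ω hcon)
  have hg_int : Integrable g (μ s) :=
    integrable_finset_sum _ (fun x _ => (integrable_const _).indicator (hBmeas x))
  have hg_val : ∫ ω, g ω ∂(μ s) = ∑ x : Fin (t + 1) → S, f (exte x) * W P s x := by
    calc ∫ ω, g ω ∂(μ s)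
        = ∫ ω, ∑ x : Fin (t + 1) → S, Set.indicator (B x) (fun _ => f (exte x)) ω ∂(μ s) := rfl
      _ = ∑ x : Fin (t + 1) → S, ∫ ω, Set.indicator (B x) (fun _ => f (exte x)) ω ∂(μ s) :=
          integral_finset_sum _ (fun x _ => (integrable_const _).indicator (hBmeas x))
      _ = ∑ x : Fin (t + 1) → S, f (exte x) * W P s x := by
          apply Finset.sum_congr rfl
          intro x _
          rw [integral_indicator_const (f (exte x)) (hBmeas x), measureReal_def, hB x, smul_eq_mul, mul_comm]
  refine ⟨hg_int.congr hae.symm, ?_⟩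
  rw [integral_congr_ae hae, hg_val]


include hμ hP0 hP1 in
lemma integral_reward (r : S → ℝ) (s : S) (t : ℕ) :
    Integrable (fun ω : ℕ → S => r (ω t)) (μ s) ∧
      ∫ ω, r (ω t) ∂(μ s) = ∑ s' : S, r s' * q P s t s' := by
  have hf : ∀ ω ω' : ℕ → S, (∀ k ≤ t, ω k = ω' k) → r (ω t) = r (ω' t) :=
    fun ω ω' h => by rw [h t le_rfl]
  obtain ⟨hint, hval⟩ := integral_coord_det hP0 hP1 hμ s t (fun ω => r (ω t)) hf
  refine ⟨hint, ?_⟩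
  rw [hval]
  calc ∑ x : Fin (t + 1) → S, r (exte x t) * W P s x
      = ∑ x : Fin (t + 1) → S, ∑ s' : S, (if exte x t = s' then r s' * W P s x else 0) := by
        apply Finset.sum_congr rfl; intro x _
        rw [Finset.sum_ite_eq Finset.univ (exte x t) (fun s' => r s' * W P s x)]
        simp
    _ = ∑ s' : S, ∑ x : Fin (t + 1) → S, (if exte x t = s' then r s' * W P s x else 0) :=
        Finset.sum_comm
    _ = ∑ s' : S, r s' * q P s t s' := by
        apply Finset.sum_congr rfl; intro s' _
        unfold q
        rw [Finset.mul_sum]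
        apply Finset.sum_congr rfl; intro x _
        split_ifs <;> ring

end Measures

/-- hitGeom, truncated at time N (as a finite sum over the first-hit time) -/
def gN (lam : ℝ) (s' : S) (N : ℕ) (ω : ℕ → S) : ℝ :=
  ∑ u ∈ Finset.Icc 1 N, if cond s' u ω then lam ^ u else 0

omit [Fintype S] [Nonempty S] [DecidableEq S] in
lemma gN_le_hitGeom {lam : ℝ} (hl0 : 0 < lam) (hl1 : lam < 1) (s' : S) (N : ℕ) (ω : ℕ → S) :
    gN lam s' N ω ≤ hitGeom lam s' ω ∧ hitGeom lam s' ω ≤ gN lam s' N ω + lam ^ (N + 1) := by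
  unfold hitGeom gN
  by_cases h : ∃ t : ℕ, 1 ≤ t ∧ ω t = s'
  · rw [dif_pos h]
    have hT1 : 1 ≤ Nat.find h := (Nat.find_spec h).1
    have hTs : ω (Nat.find h) = s' := (Nat.find_spec h).2
    have hcondT : cond s' (Nat.find h) ω :=
      ⟨hTs, fun k hk1 hk2 hc => Nat.find_min h hk2 ⟨hk1, hc⟩⟩
    have key : ∀ u ∈ Finset.Icc 1 N,
        (if cond s' u ω then lam ^ u else 0) = (if u = Nat.find h then lam ^ u else 0) := by
      intro u hu
      by_cases hc : cond s' u ω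
      · rw [if_pos hc, if_pos (cond_unique (Finset.mem_Icc.mp hu).1 hT1 hc hcondT)]
      · rw [if_neg hc, if_neg (fun he => hc (by rw [he]; exact hcondT))]
    rw [Finset.sum_congr rfl key,
      Finset.sum_ite_eq' (Finset.Icc 1 N) (Nat.find h) (fun u => lam ^ u)]
    by_cases hTN : Nat.find h ∈ Finset.Icc 1 N
    · rw [if_pos hTN]
      exact ⟨le_refl _, by linarith [pow_nonneg hl0.le (N + 1)]⟩
    · rw [if_neg hTN]
      have hTN' : N + 1 ≤ Nat.find h := by
        have := Finset.mem_Icc.not.mp hTN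
        omega
      refine ⟨pow_nonneg hl0.le _, ?_⟩
      have := pow_le_pow_of_le_one hl0.le hl1.le hTN'
      linarith
  · rw [dif_neg h]
    have hz : ∀ u ∈ Finset.Icc 1 N, (if cond s' u ω then lam ^ u else 0) = 0 := by
      intro u hu
      rw [if_neg (fun hc => h ⟨u, (Finset.mem_Icc.mp hu).1, hc.1⟩)]
    rw [Finset.sum_congr rfl hz, Finset.sum_const_zero]
    exact ⟨le_refl 0, by positivity⟩

include hP0 hP1 in
lemma fhit_le_one (s s' : S) {u : ℕ} (hu : 1 ≤ u) : fhit P s s' u ≤ 1 := by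
  have h1 := fhit_partial_le_one hP0 hP1 s s' u
  have h2 : fhit P s s' u ≤ ∑ v ∈ Finset.Icc 1 u, fhit P s s' v :=
    Finset.single_le_sum (fun v _ => fhit_nonneg hP0 s s' v)
      (Finset.mem_Icc.mpr ⟨hu, le_refl u⟩)
  linarith

lemma sum_range_succ_eq_Icc (h : ℕ → ℝ) (hz : h 0 = 0) (N : ℕ) :
    ∑ i ∈ Finset.range (N + 1), h i = ∑ u ∈ Finset.Icc 1 N, h u := by
  rw [Finset.sum_range_succ', hz, add_zero, ← Finset.Ico_add_one_right_eq_Icc, Finset.sum_Ico_eq_sum_range]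
  refine Finset.sum_congr (by congr 1 <;> omega) (fun i _ => by congr 1 <;> omega)

section Measures2

variable [MeasurableSpace S] {μ : S → Measure (ℕ → S)} (hμ : IsMarkovLaw P μ)

include hμ hP0 hP1 in
lemma integral_gN (lam : ℝ) (s s' : S) (N : ℕ) :
    Integrable (gN lam s' N) (μ s) ∧
      ∫ ω, gN lam s' N ω ∂(μ s) = ∑ u ∈ Finset.Icc 1 N, lam ^ u * fhit P s s' u := by
  have hf : ∀ ω ω' : ℕ → S, (∀ k ≤ N, ω k = ω' k) → gN lam s' N ω = gN lam s' N ω' := by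
    intro ω ω' h
    unfold gN
    apply Finset.sum_congr rfl
    intro u hu
    have hiff := cond_congr (s' := s') (u := u) (ω := ω) (ω' := ω')
      (fun k hk => h k (hk.trans (Finset.mem_Icc.mp hu).2))
    by_cases hc : cond s' u ω
    · rw [if_pos hc, if_pos (hiff.mp hc)]
    · rw [if_neg hc, if_neg (fun hcc => hc (hiff.mpr hcc))]
  obtain ⟨hint, hval⟩ := integral_coord_det hP0 hP1 hμ s N (gN lam s' N) hf
  refine ⟨hint, ?_⟩
  rw [hval]
  calc ∑ x : Fin (N + 1) → S, gN lam s' N (exte x) * W P s x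
      = ∑ x : Fin (N + 1) → S, ∑ u ∈ Finset.Icc 1 N,
          (if cond s' u (exte x) then lam ^ u * W P s x else 0) := by
        apply Finset.sum_congr rfl; intro x _
        unfold gN
        rw [Finset.sum_mul]
        apply Finset.sum_congr rfl; intro u _
        split_ifs <;> ring
    _ = ∑ u ∈ Finset.Icc 1 N, ∑ x : Fin (N + 1) → S,
          (if cond s' u (exte x) then lam ^ u * W P s x else 0) := Finset.sum_comm
    _ = ∑ u ∈ Finset.Icc 1 N, lam ^ u * fhit P s s' u := by
        apply Finset.sum_congr rfl; intro u hu
        rw [fhit_eq_long hP0 hP1 s s' (Finset.mem_Icc.mp hu).1 (Finset.mem_Icc.mp hu).2 (N := N),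
          Finset.mul_sum]
        apply Finset.sum_congr rfl; intro x _
        split_ifs <;> ring

include hμ hP0 hP1 in
lemma hitGeom_integrable {lam : ℝ} (hl0 : 0 < lam) (hl1 : lam < 1) (s s' : S) :
    Integrable (fun ω => hitGeom lam s' ω) (μ s) ∧
      Tendsto (fun N => ∑ u ∈ Finset.Icc 1 N, lam ^ u * fhit P s s' u) atTop
        (𝓝 (∫ ω, hitGeom lam s' ω ∂(μ s))) := by
  haveI : IsProbabilityMeasure (μ s) := hμ.1 s
  have hbounds := fun N ω => gN_le_hitGeom hl0 hl1 s' N ω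
  have hint_gN := fun N => (integral_gN hP0 hP1 hμ lam s s' N).1
  have hval_gN := fun N => (integral_gN hP0 hP1 hμ lam s s' N).2
  have hpow : Tendsto (fun N : ℕ => lam ^ (N + 1)) atTop (𝓝 0) :=
    (tendsto_pow_atTop_nhds_zero_of_lt_one hl0.le hl1).comp (tendsto_add_atTop_nat 1)
  have htend_pt : ∀ ω, Tendsto (fun N => gN lam s' N ω) atTop (𝓝 (hitGeom lam s' ω)) := by
    intro ω
    have hlow : Tendsto (fun N : ℕ => hitGeom lam s' ω - lam ^ (N + 1)) atTop
        (𝓝 (hitGeom lam s' ω)) := by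
      simpa using tendsto_const_nhds.sub hpow
    apply tendsto_of_tendsto_of_tendsto_of_le_of_le hlow tendsto_const_nhds
    · intro N
      dsimp only
      linarith [(hbounds N ω).2]
    · intro N
      exact (hbounds N ω).1
  have hmeas : AEStronglyMeasurable (fun ω => hitGeom lam s' ω) (μ s) :=
    aestronglyMeasurable_of_tendsto_ae atTop (fun N => (hint_gN N).aestronglyMeasurable)
      (Filter.Eventually.of_forall htend_pt)
  have h_int : Integrable (fun ω => hitGeom lam s' ω) (μ s) := by
    apply (integrable_const (1 : ℝ)).mono' hmeas
    apply Filter.Eventually.of_forall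
    intro ω
    unfold hitGeom
    split_ifs with h
    · rw [Real.norm_eq_abs, abs_of_nonneg (pow_nonneg hl0.le _)]
      exact pow_le_one₀ hl0.le hl1.le
    · simp
  refine ⟨h_int, ?_⟩
  have hIle : ∀ N, ∫ ω, gN lam s' N ω ∂(μ s) ≤ ∫ ω, hitGeom lam s' ω ∂(μ s) := fun N =>
    integral_mono (hint_gN N) h_int (fun ω => (hbounds N ω).1)
  have hIge : ∀ N, ∫ ω, hitGeom lam s' ω ∂(μ s) ≤ ∫ ω, gN lam s' N ω ∂(μ s) + lam ^ (N + 1) := by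
    intro N
    have h1 : ∫ ω, hitGeom lam s' ω ∂(μ s) ≤ ∫ ω, (gN lam s' N ω + lam ^ (N + 1)) ∂(μ s) :=
      integral_mono h_int ((hint_gN N).add (integrable_const _)) (fun ω => (hbounds N ω).2)
    rwa [integral_add (hint_gN N) (integrable_const _), integral_const, measureReal_def, measure_univ,
      ENNReal.toReal_one, one_smul] at h1
  rw [show (fun N => ∑ u ∈ Finset.Icc 1 N, lam ^ u * fhit P s s' u)
      = fun N => ∫ ω, gN lam s' N ω ∂(μ s) from funext fun N => (hval_gN N).symm]
  have hlow : Tendsto (fun N : ℕ => (∫ ω, hitGeom lam s' ω ∂(μ s)) - lam ^ (N + 1)) atTop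
      (𝓝 (∫ ω, hitGeom lam s' ω ∂(μ s))) := by
    simpa using tendsto_const_nhds.sub hpow
  apply tendsto_of_tendsto_of_tendsto_of_le_of_le hlow tendsto_const_nhds
  · intro N
    dsimp only
    linarith [hIge N]
  · intro N
    exact hIle N

include hμ hP0 hP1 in
lemma hitGeom_eq_tsum {lam : ℝ} (hl0 : 0 < lam) (hl1 : lam < 1) (s s' : S) :
    (∫ ω, hitGeom lam s' ω ∂(μ s))
      = ∑' u : ℕ, (if u = 0 then 0 else lam ^ u * fhit P s s' u) := by
  set a : ℕ → ℝ := fun u => if u = 0 then 0 else lam ^ u * fhit P s s' u with ha_def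
  have ha_nonneg : ∀ u, 0 ≤ a u := by
    intro u
    rw [ha_def]
    dsimp only
    split_ifs
    · exact le_refl 0
    · exact mul_nonneg (pow_nonneg hl0.le u) (fhit_nonneg hP0 s s' u)
  have ha_le : ∀ u, a u ≤ lam ^ u := by
    intro u
    rw [ha_def]
    dsimp only
    split_ifs with h
    · exact pow_nonneg hl0.le u
    · have : fhit P s s' u ≤ 1 := fhit_le_one hP0 hP1 s s' (by omega)
      nlinarith [pow_nonneg hl0.le u]
  have ha_sum : Summable a :=
    Summable.of_nonneg_of_le ha_nonneg ha_le (summable_geometric_of_lt_one hl0.le hl1)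
  have hps : ∀ N, ∑ i ∈ Finset.range (N + 1), a i
      = ∑ u ∈ Finset.Icc 1 N, lam ^ u * fhit P s s' u := by
    intro N
    rw [sum_range_succ_eq_Icc a (by rw [ha_def]; simp) N]
    apply Finset.sum_congr rfl
    intro u hu
    rw [ha_def]
    dsimp only
    rw [if_neg (by have := (Finset.mem_Icc.mp hu).1; omega)]
  have h1 : Tendsto (fun N => ∑ i ∈ Finset.range (N + 1), a i) atTop (𝓝 (∑' u, a u)) :=
    ha_sum.hasSum.tendsto_sum_nat.comp (tendsto_add_atTop_nat 1)
  have h2 := (hitGeom_integrable hP0 hP1 hμ hl0 hl1 s s').2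
  rw [show (fun N => ∑ u ∈ Finset.Icc 1 N, lam ^ u * fhit P s s' u)
      = (fun N => ∑ i ∈ Finset.range (N + 1), a i) from funext fun N => (hps N).symm] at h2
  exact tendsto_nhds_unique h2 h1


end Measures2

section Analytic

variable {lam : ℝ}

include hP0 hP1 in
lemma q_geom_summable (hl0 : 0 < lam) (hl1 : lam < 1) (z s' : S) :
    Summable (fun t : ℕ => lam ^ t * q P z t s') := by
  apply Summable.of_nonneg_of_le
    (fun t => mul_nonneg (pow_nonneg hl0.le t) (q_nonneg hP0 z t s'))
    (fun t => mul_le_of_le_one_right (pow_nonneg hl0.le t) (q_le_one hP0 hP1 z t s'))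
  exact summable_geometric_of_lt_one hl0.le hl1

include hP0 in
lemma a_nonneg (hl0 : 0 < lam) (z s' : S) (u : ℕ) :
    0 ≤ (if u = 0 then 0 else lam ^ u * fhit P z s' u) := by
  split_ifs
  · exact le_refl 0
  · exact mul_nonneg (pow_nonneg hl0.le u) (fhit_nonneg hP0 z s' u)

include hP0 hP1 in
lemma a_summable (hl0 : 0 < lam) (hl1 : lam < 1) (z s' : S) :
    Summable (fun u : ℕ => if u = 0 then 0 else lam ^ u * fhit P z s' u) := by
  apply Summable.of_nonneg_of_le (a_nonneg hP0 hl0 z s') (fun u => ?_)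
  · exact summable_geometric_of_lt_one hl0.le hl1
  · split_ifs with h
    · exact pow_nonneg hl0.le u
    · have h1 : fhit P z s' u ≤ 1 := fhit_le_one hP0 hP1 z s' (by omega)
      have h2 : 0 ≤ lam ^ u := pow_nonneg hl0.le u
      nlinarith

include hP0 hP1 in
lemma fhit_cut_summable (z s' : S) :
    Summable (fun u : ℕ => if u = 0 then 0 else fhit P z s' u)
      ∧ (∑' u : ℕ, (if u = 0 then 0 else fhit P z s' u)) ≤ 1 := by
  have hb0 : ∀ u, 0 ≤ (if u = 0 then 0 else fhit P z s' u) := by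
    intro u
    split_ifs
    · exact le_refl 0
    · exact fhit_nonneg hP0 z s' u
  have hbound : ∀ n : ℕ, ∑ i ∈ Finset.range n, (if i = 0 then 0 else fhit P z s' i) ≤ 1 := by
    intro n
    match n with
    | 0 => simp
    | Nat.succ m =>
      rw [sum_range_succ_eq_Icc _ (by simp) m]
      calc ∑ u ∈ Finset.Icc 1 m, (if u = 0 then 0 else fhit P z s' u)
          = ∑ u ∈ Finset.Icc 1 m, fhit P z s' u := by
            apply Finset.sum_congr rfl
            intro u hu
            rw [if_neg (by have := (Finset.mem_Icc.mp hu).1; omega)]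
        _ ≤ 1 := fhit_partial_le_one hP0 hP1 z s' m
  have hsum : Summable (fun u : ℕ => if u = 0 then 0 else fhit P z s' u) :=
    summable_of_sum_range_le hb0 hbound
  exact ⟨hsum, Summable.tsum_le_of_sum_range_le hsum hbound⟩

include hP0 hP1 in
lemma tsum_a_le_lam (hl0 : 0 < lam) (hl1 : lam < 1) (z s' : S) :
    (∑' u : ℕ, (if u = 0 then 0 else lam ^ u * fhit P z s' u)) ≤ lam := by
  obtain ⟨hb_sum, hb_le⟩ := fhit_cut_summable hP0 hP1 z s'
  have hle : ∀ u : ℕ, (if u = 0 then 0 else lam ^ u * fhit P z s' u)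
      ≤ lam * (if u = 0 then 0 else fhit P z s' u) := by
    intro u
    split_ifs with h
    · simp
    · have h1 : lam ^ u ≤ lam := by
        calc lam ^ u ≤ lam ^ 1 := pow_le_pow_of_le_one hl0.le hl1.le (by omega)
          _ = lam := pow_one lam
      exact mul_le_mul_of_nonneg_right h1 (fhit_nonneg hP0 z s' u)
  calc (∑' u : ℕ, (if u = 0 then 0 else lam ^ u * fhit P z s' u))
      ≤ ∑' u : ℕ, lam * (if u = 0 then 0 else fhit P z s' u) :=
        Summable.tsum_le_tsum hle (a_summable hP0 hP1 hl0 hl1 z s') (hb_sum.mul_left lam)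
    _ = lam * ∑' u : ℕ, (if u = 0 then 0 else fhit P z s' u) := tsum_mul_left
    _ ≤ lam * 1 := mul_le_mul_of_nonneg_left hb_le hl0.le
    _ = lam := mul_one lam

include hP0 hP1 in
lemma GG_key (hl0 : 0 < lam) (hl1 : lam < 1) (z s' : S) :
    (∑' t : ℕ, lam ^ t * q P z t s')
      = (if z = s' then 1 else 0)
        + (∑' u : ℕ, (if u = 0 then 0 else lam ^ u * fhit P z s' u))
            * (∑' t : ℕ, lam ^ t * q P s' t s') := by
  set a : ℕ → ℝ := fun u => if u = 0 then 0 else lam ^ u * fhit P z s' u with ha_def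
  set b : ℕ → ℝ := fun v => lam ^ v * q P s' v s' with hb_def
  have ha_sum : Summable a := a_summable hP0 hP1 hl0 hl1 z s'
  have hb_sum : Summable b := q_geom_summable hP0 hP1 hl0 hl1 s' s'
  have ha_norm : Summable (fun u => ‖a u‖) := by
    have : ∀ u, ‖a u‖ = a u := fun u => Real.norm_of_nonneg (a_nonneg hP0 hl0 z s' u)
    simpa [this] using ha_sum
  have hb_norm : Summable (fun v => ‖b v‖) := by
    have : ∀ v, ‖b v‖ = b v := fun v =>
      Real.norm_of_nonneg (mul_nonneg (pow_nonneg hl0.le v) (q_nonneg hP0 s' v s'))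
    simpa [this] using hb_sum
  have hcauchy := tsum_mul_tsum_eq_tsum_sum_antidiagonal_of_summable_norm ha_norm hb_norm
  have hterm : ∀ n : ℕ, (∑ kl ∈ Finset.HasAntidiagonal.antidiagonal n, a kl.1 * b kl.2)
      = if n = 0 then 0 else lam ^ n * q P z n s' := by
    intro n
    rw [Finset.Nat.sum_antidiagonal_eq_sum_range_succ_mk (fun kl => a kl.1 * b kl.2) n]
    match n with
    | 0 =>
      simp [ha_def]
    | Nat.succ m =>
      rw [if_neg (Nat.succ_ne_zero m), Finset.sum_range_succ']
      have ha0 : a 0 * b (m + 1 - 0) = 0 := by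
        rw [ha_def]
        simp
      rw [ha0, add_zero]
      have hL : ∀ k ∈ Finset.range (m + 1),
          a (k + 1) * b (m + 1 - (k + 1))
            = lam ^ (m + 1) * (fhit P z s' (k + 1) * q P s' (m - k) s') := by
        intro k hk
        have hk' : k ≤ m := by
          have := Finset.mem_range.mp hk
          omega
        have hidx : m + 1 - (k + 1) = m - k := by omega
        rw [hidx, ha_def, hb_def]
        dsimp only
        rw [if_neg (Nat.succ_ne_zero k)]
        have hpow : lam ^ (k + 1) * lam ^ (m - k) = lam ^ (m + 1) := by
          rw [← pow_add]
          congr 1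
          omega
        calc lam ^ (k + 1) * fhit P z s' (k + 1) * (lam ^ (m - k) * q P s' (m - k) s')
            = (lam ^ (k + 1) * lam ^ (m - k)) * (fhit P z s' (k + 1) * q P s' (m - k) s') := by
              ring
          _ = lam ^ (m + 1) * (fhit P z s' (k + 1) * q P s' (m - k) s') := by rw [hpow]
      rw [Finset.sum_congr rfl hL]
      -- now the right-hand side via first passage
      rw [first_passage hP1 s' (m + 1) (by omega) z, Finset.mul_sum]
      rw [← Finset.Ico_add_one_right_eq_Icc, Finset.sum_Ico_eq_sum_range]
      refine (Finset.sum_congr (by congr 1 <;> omega) (fun k hk => ?_)).symm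
      have hk' : k ≤ m := by
        have h1 := Finset.mem_range.mp hk
        omega
      have e1 : 1 + k = k + 1 := by omega
      have e2 : m + 1 - (k + 1) = m - k := by omega
      rw [e1, e2]
  rw [tsum_congr hterm] at hcauchy
  -- LHS series decomposition
  have hc_sum : Summable (fun n : ℕ => if n = 0 then 0 else lam ^ n * q P z n s') := by
    apply Summable.of_nonneg_of_le (fun n => ?_) (fun n => ?_)
      (summable_geometric_of_lt_one hl0.le hl1)
    · split_ifs
      · exact le_refl 0
      · exact mul_nonneg (pow_nonneg hl0.le n) (q_nonneg hP0 z n s')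
    · split_ifs
      · exact pow_nonneg hl0.le n
      · exact mul_le_of_le_one_right (pow_nonneg hl0.le n) (q_le_one hP0 hP1 z n s')
  have hq_sum : Summable (fun t : ℕ => lam ^ t * q P z t s') :=
    q_geom_summable hP0 hP1 hl0 hl1 z s'
  have hdecomp1 : (∑' t : ℕ, lam ^ t * q P z t s')
      = q P z 0 s' + ∑' t : ℕ, lam ^ (t + 1) * q P z (t + 1) s' := by
    rw [Summable.tsum_eq_zero_add hq_sum, pow_zero, one_mul]
  have hdecomp2 : (∑' n : ℕ, (if n = 0 then 0 else lam ^ n * q P z n s'))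
      = ∑' t : ℕ, lam ^ (t + 1) * q P z (t + 1) s' := by
    rw [Summable.tsum_eq_zero_add hc_sum, if_pos rfl, zero_add]
    apply tsum_congr
    intro t
    rw [if_neg (Nat.succ_ne_zero t)]
  rw [hdecomp1, ← hdecomp2, ← hcauchy, q_zero]

end Analytic


section Final

variable [MeasurableSpace S] {μ : S → Measure (ℕ → S)} (hμ : IsMarkovLaw P μ)

include hP0 hP1 hμ in
theorem final_main {lam : ℝ} (hl0 : 0 < lam) (hl1 : lam < 1) (r : S → ℝ) (s : S) :
    (∑' t : ℕ, lam ^ t * ∫ ω, r (ω t) ∂(μ s))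
      = r s + ∑ s' : S,
          r s' * ((∫ ω, hitGeom lam s' ω ∂(μ s)) /
            (1 - ∫ ω, hitGeom lam s' ω ∂(μ s'))) := by
  have hF : ∀ z s' : S, (∫ ω, hitGeom lam s' ω ∂(μ z))
      = ∑' u : ℕ, (if u = 0 then 0 else lam ^ u * fhit P z s' u) :=
    fun z s' => hitGeom_eq_tsum hP0 hP1 hμ hl0 hl1 z s'
  have hdenom : ∀ s' : S, 0 < 1 - ∫ ω, hitGeom lam s' ω ∂(μ s') := by
    intro s'
    have h := tsum_a_le_lam hP0 hP1 hl0 hl1 s' s'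
    rw [← hF s' s'] at h
    linarith
  have hGG1 : ∀ s' : S,
      (∑' t : ℕ, lam ^ t * q P s' t s') * (1 - ∫ ω, hitGeom lam s' ω ∂(μ s')) = 1 := by
    intro s'
    have h := GG_key hP0 hP1 hl0 hl1 s' s'
    rw [if_pos rfl, ← hF s' s'] at h
    linear_combination h
  have hGGs : ∀ s' : S, (∑' t : ℕ, lam ^ t * q P s' t s')
      = 1 / (1 - ∫ ω, hitGeom lam s' ω ∂(μ s')) := fun s' =>
    (eq_div_iff (ne_of_gt (hdenom s'))).mpr (hGG1 s')
  have hGG : ∀ s' : S, (∑' t : ℕ, lam ^ t * q P s t s')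
      = (if s = s' then 1 else 0)
        + (∫ ω, hitGeom lam s' ω ∂(μ s)) / (1 - ∫ ω, hitGeom lam s' ω ∂(μ s')) := by
    intro s'
    have h := GG_key hP0 hP1 hl0 hl1 s s'
    rw [← hF s s', hGGs s'] at h
    rw [h, mul_one_div]
  calc ∑' t : ℕ, lam ^ t * ∫ ω, r (ω t) ∂(μ s)
      = ∑' t : ℕ, ∑ s' : S, r s' * (lam ^ t * q P s t s') := by
        apply tsum_congr
        intro t
        rw [(integral_reward hP0 hP1 hμ r s t).2, Finset.mul_sum]
        apply Finset.sum_congr rfl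
        intro s' _
        ring
    _ = ∑ s' : S, ∑' t : ℕ, r s' * (lam ^ t * q P s t s') :=
        Summable.tsum_finsetSum (fun s' _ => ((q_geom_summable hP0 hP1 hl0 hl1 s s').mul_left (r s')))
    _ = ∑ s' : S, r s' * ∑' t : ℕ, lam ^ t * q P s t s' := by
        apply Finset.sum_congr rfl
        intro s' _
        exact tsum_mul_left
    _ = ∑ s' : S, ((if s = s' then r s' else 0)
          + r s' * ((∫ ω, hitGeom lam s' ω ∂(μ s)) /
              (1 - ∫ ω, hitGeom lam s' ω ∂(μ s')))) := by
        apply Finset.sum_congr rfl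
        intro s' _
        rw [hGG s']
        split_ifs <;> ring
    _ = r s + ∑ s' : S, r s' * ((∫ ω, hitGeom lam s' ω ∂(μ s)) /
          (1 - ∫ ω, hitGeom lam s' ω ∂(μ s'))) := by
        rw [Finset.sum_add_distrib]
        congr 1
        rw [Finset.sum_ite_eq Finset.univ s r]
        simp

end Final

end

/-- the expected total discounted reward in terms of expected
hitting-time generating functions:
`v(s) = r(s) + Σ_{s'} r(s')·E_s[λ^{τ_{s'}}]/(1 − E_{s'}[λ^{τ_{s'}}])`. -/
theorem value_eq_hitting_time_sum
    {S : Type*} [Fintype S] [Nonempty S] [DecidableEq S] [MeasurableSpace S]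
    (P : S → S → ℝ) (hP0 : ∀ s s' : S, 0 ≤ P s s')
    (hP1 : ∀ s : S, ∑ s' : S, P s s' = 1)
    (lam : ℝ) (hl0 : 0 < lam) (hl1 : lam < 1)
    (r : S → ℝ)
    (μ : S → Measure (ℕ → S)) (hμ : IsMarkovLaw P μ)
    (s : S) :
    (∑' t : ℕ, lam ^ t * ∫ ω, r (ω t) ∂(μ s))
      = r s + ∑ s' : S,
          r s' * ((∫ ω, hitGeom lam s' ω ∂(μ s)) /
            (1 - ∫ ω, hitGeom lam s' ω ∂(μ s'))) := by
  exact final_main hP0 hP1 hμ hl0 hl1 r s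

end MDPHitting
end

section
/- For every ε > 0 there exists K ∈ ℕ such that for all κ ≥ K, all configurations σ ∈ S, and all actions a ∈ A, one has Σ_{η∈U} P̃_κ(η|σ, a) ≥ 1 − ε; equivalently, Σ_{η∈U} P̃_κ(η|σ, a) → 1 as κ → ∞, uniformly in σ and a. -/
open Filter Topology

namespace IsingS

open scoped Classical

variable (N : ℕ) [NeZero N]

/-- Vertex set: the N×N discrete torus. -/
abbrev V := ZMod N × ZMod N

/-- Configurations: `true` encodes spin +1, `false` encodes spin -1. -/
abbrev Cfg := V N → Bool

/-- The spin value in ℤ of a Boolean spin. -/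
def spin (b : Bool) : ℤ := if b then 1 else -1

/-- The four nearest neighbors of a vertex. -/
def nbrFinset (i : V N) : Finset (V N) :=
  {i + ((1 : ZMod N), (0 : ZMod N)), i + ((-1 : ZMod N), (0 : ZMod N)),
   i + ((0 : ZMod N), (1 : ZMod N)), i + ((0 : ZMod N), (-1 : ZMod N))}

/-- The Hamiltonian with external magnetic field `h`. -/
noncomputable def H (h : ℝ) (σ : Cfg N) : ℝ :=
  -(1/2) * (((∑ i : V N, ∑ j ∈ nbrFinset N i, spin (σ i) * spin (σ j)) : ℤ) : ℝ)
    - h * (((∑ i : V N, spin (σ i)) : ℤ) : ℝ)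

/-- Flip the spin at vertex `i`. -/
def flip (σ : Cfg N) (i : V N) : Cfg N := Function.update σ i (!σ i)

/-- Spin `i` is susceptible in `σ` if flipping it does not increase the energy. -/
def susceptible (h : ℝ) (σ : Cfg N) (i : V N) : Prop :=
  H N h (flip N σ i) ≤ H N h σ

/-- A configuration is robust if it has no susceptible spins. -/
def robust (h : ℝ) (σ : Cfg N) : Prop := ∀ i : V N, ¬ susceptible N h σ i

/-- The set of robust configurations. -/
noncomputable def Uset (h : ℝ) : Finset (Cfg N) :=
  Finset.univ.filter (fun σ => robust N h σ)

/-- Metropolis rate of flipping spin `i` from `σ` at inverse temperature `β`. -/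
noncomputable def metroRate (h β : ℝ) (σ : Cfg N) (i : V N) : ℝ :=
  (1 / (N : ℝ) ^ 2) * min 1 (Real.exp (-β * (H N h (flip N σ i) - H N h σ)))

/-- The Metropolis transition matrix at inverse temperature `β`. -/
noncomputable def pβ (h β : ℝ) (σ η : Cfg N) : ℝ :=
  if η = σ then 1 - ∑ i : V N, metroRate N h β σ i
  else ∑ i ∈ Finset.univ.filter (fun i => flip N σ i = η), metroRate N h β σ i

/-- The low-temperature dynamics `p̃ = lim_{β→∞} p_β`. -/
noncomputable def ptilde (h : ℝ) (σ η : Cfg N) : ℝ :=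
  limUnder atTop (fun β : ℝ => pβ N h β σ η)

/-- The low-temperature dynamics as a matrix. -/
noncomputable def Pmat (h : ℝ) : Matrix (Cfg N) (Cfg N) ℝ :=
  fun σ η => ptilde N h σ η

/-- κ-step low-temperature transition probabilities, started from the
post-decision configuration of action `a` (an element of `V ∪ {0}`,
encoded as `Option (V N)` with `none` playing the role of `0`). -/
abbrev Act := Option (V N)

/-- Post-decision configuration. -/
def post (σ : Cfg N) : Act N → Cfg N
  | none => σ
  | some i => flip N σ i

/-- `P̃_κ(η | σ, a)`. -/
noncomputable def Ptilκ (h : ℝ) (κ : ℕ) (σ : Cfg N) (a : Act N) (η : Cfg N) : ℝ :=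
  (Pmat N h ^ κ) (post N σ a) η

/-- `Q_κ(η | σ, a)`, the κ-step probabilities conditioned on ending in a robust
configuration (with the convention 0/0 = 0). -/
noncomputable def Qκ (h : ℝ) (κ : ℕ) (σ : Cfg N) (a : Act N) (η : Cfg N) : ℝ :=
  if robust N h η then
    Ptilκ N h κ σ a η / ∑ η' ∈ Uset N h, Ptilκ N h κ σ a η'
  else 0

/-!
A susceptible flip strictly lowers the energy: it changes `H` by `2 σ(i) (m + h)` with `m` an
integer, and `0 < h < 1` rules out `m + h = 0`. So every non-robust configuration has, under `p̃`,
probability at least `1/N²` of stepping to a configuration of strictly lower energy, while robust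
configurations are absorbing. A chain of such descents has fewer than `T = |S|` steps, so from any
configuration the dynamics is absorbed within `T` steps with probability at least `c = N^(-2T)`; by
the Markov property the probability of not yet being absorbed after `jT` steps is at most
`(1 - c)^j`.
-/

end IsingS

open Filter Topology Finset Function

namespace Matrix

variable {S : Type*} [Fintype S] [DecidableEq S] {P : Matrix S S ℝ} {U : Finset S}

noncomputable def massIn (P : Matrix S S ℝ) (U : Finset S) (κ : ℕ) (σ : S) : ℝ :=
  ∑ η ∈ U, (P ^ κ) σ η

lemma massIn_add (m n : ℕ) (σ : S) :
    massIn P U (m + n) σ = ∑ τ, (P ^ m) σ τ * massIn P U n τ := by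
  simp only [massIn, pow_add, mul_apply, mul_sum]
  exact sum_comm

lemma massIn_nonneg (hP : P ∈ rowStochastic ℝ S) (κ : ℕ) (σ : S) : 0 ≤ massIn P U κ σ :=
  sum_nonneg fun _ _ => nonneg_of_mem_rowStochastic (pow_mem hP κ)

lemma one_sub_massIn (hP : P ∈ rowStochastic ℝ S) (κ : ℕ) (σ : S) :
    1 - massIn P U κ σ = ∑ η ∈ Uᶜ, (P ^ κ) σ η := by
  rw [← sum_row_of_mem_rowStochastic (pow_mem hP κ) σ, ← sum_add_sum_compl U, massIn]
  ring

lemma massIn_le_one (hP : P ∈ rowStochastic ℝ S) (κ : ℕ) (σ : S) : massIn P U κ σ ≤ 1 := by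
  have := one_sub_massIn (U := U) hP κ σ ▸
    sum_nonneg fun _ _ => nonneg_of_mem_rowStochastic (pow_mem hP κ)
  linarith

lemma massIn_mono (hP : P ∈ rowStochastic ℝ S) (hU : ∀ σ ∈ U, ∑ η ∈ U, P σ η = 1) (σ : S) :
    Monotone (massIn P U · σ) := by
  refine monotone_nat_of_le_succ fun κ => ?_
  calc massIn P U κ σ = ∑ τ ∈ U, (P ^ κ) σ τ * massIn P U 1 τ :=
        sum_congr rfl fun τ hτ => by rw [massIn, pow_one, hU τ hτ, mul_one]
    _ ≤ ∑ τ, (P ^ κ) σ τ * massIn P U 1 τ :=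
        sum_le_sum_of_subset_of_nonneg (subset_univ U) fun τ _ _ =>
          mul_nonneg (nonneg_of_mem_rowStochastic (pow_mem hP κ)) (massIn_nonneg hP 1 τ)
    _ = massIn P U (κ + 1) σ := (massIn_add κ 1 σ).symm

lemma massIn_of_mem (hP : P ∈ rowStochastic ℝ S) (hU : ∀ σ ∈ U, ∑ η ∈ U, P σ η = 1)
    {σ : S} (hσ : σ ∈ U) (κ : ℕ) : massIn P U κ σ = 1 := by
  refine (massIn_le_one hP κ σ).antisymm ?_
  calc 1 = massIn P U 0 σ := by simp [massIn, one_apply, hσ]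
    _ ≤ massIn P U κ σ := massIn_mono hP hU σ κ.zero_le

lemma one_sub_massIn_add_le (hP : P ∈ rowStochastic ℝ S) (hU : ∀ σ ∈ U, ∑ η ∈ U, P σ η = 1)
    {T n : ℕ} {c δ : ℝ} (hT : ∀ τ, c ≤ massIn P U T τ) (hn : ∀ τ, 1 - massIn P U n τ ≤ δ)
    (hδ : 0 ≤ δ) (σ : S) : 1 - massIn P U (T + n) σ ≤ (1 - c) * δ := by
  have hPT : ∀ τ, 0 ≤ (P ^ T) σ τ := fun _ => nonneg_of_mem_rowStochastic (pow_mem hP T)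
  calc 1 - massIn P U (T + n) σ = ∑ τ, (P ^ T) σ τ * (1 - massIn P U n τ) := by
        simp only [mul_sub, mul_one, sum_sub_distrib, massIn_add,
          sum_row_of_mem_rowStochastic (pow_mem hP T)]
    _ = ∑ τ ∈ Uᶜ, (P ^ T) σ τ * (1 - massIn P U n τ) := by
        rw [← sum_add_sum_compl U, sum_eq_zero fun τ hτ => by
          rw [massIn_of_mem hP hU hτ, sub_self, mul_zero], zero_add]
    _ ≤ ∑ τ ∈ Uᶜ, (P ^ T) σ τ * δ :=
        sum_le_sum fun τ _ => mul_le_mul_of_nonneg_left (hn τ) (hPT τ)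
    _ = (1 - massIn P U T σ) * δ := by rw [← sum_mul, one_sub_massIn hP]
    _ ≤ (1 - c) * δ := mul_le_mul_of_nonneg_right (by linarith [hT σ]) hδ

lemma one_sub_massIn_mul_le (hP : P ∈ rowStochastic ℝ S) (hU : ∀ σ ∈ U, ∑ η ∈ U, P σ η = 1)
    {T : ℕ} {c : ℝ} (hT : ∀ τ, c ≤ massIn P U T τ) (j : ℕ) (σ : S) :
    1 - massIn P U (j * T) σ ≤ (1 - c) ^ j := by
  induction j generalizing σ with
  | zero => simpa using massIn_nonneg hP 0 σ
  | succ j ih =>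
    have hc : c ≤ 1 := (hT σ).trans (massIn_le_one hP T σ)
    rw [add_mul, one_mul, add_comm, pow_succ']
    exact one_sub_massIn_add_le hP hU hT ih (pow_nonneg (by linarith) j) σ

lemma pow_le_massIn_of_descent {α : Type*} [LinearOrder α] (hP : P ∈ rowStochastic ℝ S)
    (hU : ∀ σ ∈ U, ∑ η ∈ U, P σ η = 1) (E : S → α) {c : ℝ} (hc0 : 0 ≤ c) (hc1 : c ≤ 1)
    (hdesc : ∀ σ ∉ U, ∃ τ, E τ < E σ ∧ c ≤ P σ τ) (k : ℕ) (σ : S)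
    (hk : #(univ.filter (E · < E σ)) ≤ k) : c ^ k ≤ massIn P U k σ := by
  by_cases hσ : σ ∈ U
  · rw [massIn_of_mem hP hU hσ]
    exact pow_le_one₀ hc0 hc1
  obtain ⟨τ, hEτ, hPτ⟩ := hdesc σ hσ
  have hbelow : univ.filter (E · < E τ) ⊂ univ.filter (E · < E σ) :=
    (ssubset_iff_of_subset fun η hη => by simp_all [lt_trans _ hEτ]).2
      ⟨τ, by simpa using hEτ, by simp⟩
  obtain ⟨k, rfl⟩ : ∃ k', k = k' + 1 :=
    Nat.exists_eq_succ_of_ne_zero (by have := card_lt_card hbelow; omega)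
  have hτ : c ^ k ≤ massIn P U k τ :=
    pow_le_massIn_of_descent hP hU E hc0 hc1 hdesc k τ (by have := card_lt_card hbelow; omega)
  calc c ^ (k + 1) = c * c ^ k := pow_succ' c k
    _ ≤ P σ τ * massIn P U k τ :=
        mul_le_mul hPτ hτ (pow_nonneg hc0 k) (nonneg_of_mem_rowStochastic hP)
    _ ≤ ∑ τ', P σ τ' * massIn P U k τ' :=
        single_le_sum (f := fun τ' => P σ τ' * massIn P U k τ') (fun τ' _ =>
          mul_nonneg (nonneg_of_mem_rowStochastic hP) (massIn_nonneg hP k τ')) (mem_univ τ)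
    _ = massIn P U (k + 1) σ := by rw [add_comm, massIn_add, pow_one]

theorem exists_one_sub_le_massIn_of_descent {α : Type*} [LinearOrder α]
    (hP : P ∈ rowStochastic ℝ S) (hU : ∀ σ ∈ U, ∑ η ∈ U, P σ η = 1) (E : S → α) {c : ℝ}
    (hc0 : 0 < c) (hc1 : c ≤ 1) (hdesc : ∀ σ ∉ U, ∃ τ, E τ < E σ ∧ c ≤ P σ τ)
    {ε : ℝ} (hε : 0 < ε) : ∃ K : ℕ, ∀ κ ≥ K, ∀ σ, 1 - ε ≤ massIn P U κ σ := by
  set T := Fintype.card S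
  have hT : ∀ σ, c ^ T ≤ massIn P U T σ := fun σ =>
    pow_le_massIn_of_descent hP hU E hc0.le hc1 hdesc T σ ((card_filter_le _ _).trans card_univ.le)
  have hgeom : Tendsto (fun j : ℕ => (1 - c ^ T) ^ j) atTop (𝓝 0) :=
    tendsto_pow_atTop_nhds_zero_of_lt_one (by linarith [pow_le_one₀ hc0.le hc1 (n := T)])
      (by linarith [pow_pos hc0 T])
  obtain ⟨j, hj⟩ := (hgeom.eventually (gt_mem_nhds hε)).exists
  refine ⟨j * T, fun κ hκ σ => ?_⟩
  linarith [one_sub_massIn_mul_le hP hU hT j σ, massIn_mono hP hU σ hκ]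

end Matrix

theorem sum_sum_update_neg {V R : Type*} [Fintype V] [DecidableEq V] [CommRing R]
    (nbr : V → Finset V) (hsymm : ∀ i j, j ∈ nbr i → i ∈ nbr j) (hirr : ∀ i, i ∉ nbr i)
    (s : V → R) (i : V) :
    ∑ k, ∑ j ∈ nbr k, update s i (-s i) k * update s i (-s i) j
      = ∑ k, ∑ j ∈ nbr k, s k * s j - 4 * s i * ∑ j ∈ nbr i, s j := by
  have hterm : ∀ k, ∀ j ∈ nbr k, update s i (-s i) k * update s i (-s i) j
      = s k * s j - 2 * s i * ((if k = i then s j else 0) + (if j = i then s k else 0)) := by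
    intro k j hj
    have hjk : j ≠ k := fun h => hirr k (h ▸ hj)
    by_cases hk : k = i <;> by_cases hji : j = i
    · exact absurd (hji.trans hk.symm) hjk
    all_goals simp only [update_apply, hk, hji, if_true, if_false]; ring
  have hleft : ∑ k, ∑ j ∈ nbr k, (if k = i then s j else 0) = ∑ j ∈ nbr i, s j := by
    simp only [sum_ite_irrel, sum_const_zero, sum_ite_eq', mem_univ, if_true]
  have hright : ∑ k, ∑ j ∈ nbr k, (if j = i then s k else 0) = ∑ j ∈ nbr i, s j := by
    simp only [sum_ite_eq', ← sum_filter]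
    exact sum_congr (by ext k; simpa using ⟨hsymm k i, hsymm i k⟩) fun _ _ => rfl
  rw [sum_congr rfl fun k _ => sum_congr rfl (hterm k)]
  simp only [sum_sub_distrib, ← mul_sum, sum_add_distrib, hleft, hright]
  ring

lemma tendsto_min_one_exp (d : ℝ) :
    Tendsto (fun β : ℝ => min 1 (Real.exp (-β * d))) atTop (𝓝 (if d ≤ 0 then 1 else 0)) := by
  split_ifs with hd
  · refine tendsto_const_nhds.congr' ?_
    filter_upwards [eventually_ge_atTop 0] with β hβ
    exact (min_eq_left (Real.one_le_exp (by nlinarith))).symm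
  · have hexp : Tendsto (fun β : ℝ => Real.exp (-β * d)) atTop (𝓝 0) :=
      (Real.tendsto_exp_neg_atTop_nhds_zero.comp (tendsto_id.atTop_mul_const (not_le.1 hd))).congr
        fun β => by simp [neg_mul]
    simpa [min_eq_right zero_le_one] using (tendsto_const_nhds (x := (1 : ℝ))).min hexp

namespace IsingS

lemma spin_ne_zero (b : Bool) : spin b ≠ 0 := by
  cases b <;> decide

lemma spin_not (b : Bool) : spin (!b) = -spin b := by
  cases b <;> rfl

lemma mem_nbrFinset_symm {N : ℕ} {i j : V N} (hj : j ∈ nbrFinset N i) : i ∈ nbrFinset N j := by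
  simp only [nbrFinset, mem_insert, mem_singleton] at hj ⊢
  rcases hj with rfl | rfl | rfl | rfl <;> simp [add_assoc]

lemma self_notMem_nbrFinset {N : ℕ} (hN : 1 < N) (i : V N) : i ∉ nbrFinset N i := by
  have : Fact (1 < N) := ⟨hN⟩
  simp [nbrFinset, Prod.ext_iff]

lemma spin_flip {N : ℕ} (σ : Cfg N) (i j : V N) :
    spin (flip N σ i j) = update (fun k => spin (σ k)) i (-spin (σ i)) j := by
  by_cases hj : j = i
  · subst hj; simp [flip, spin_not]
  · simp [flip, update_of_ne hj]

variable {N : ℕ} [NeZero N]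

lemma H_flip_sub_H (hN : 1 < N) (h : ℝ) (σ : Cfg N) (i : V N) :
    H N h (flip N σ i) - H N h σ
      = 2 * spin (σ i) * (((∑ j ∈ nbrFinset N i, spin (σ j) : ℤ) : ℝ) + h) := by
  simp only [H, spin_flip]
  rw [sum_sum_update_neg (nbrFinset N) (fun _ _ => mem_nbrFinset_symm) (self_notMem_nbrFinset hN),
    sum_update_of_mem (mem_univ i),
    sum_eq_add_sum_sdiff_singleton_of_mem (mem_univ i) (fun k => spin (σ k))]
  push_cast
  ring

lemma H_flip_lt_of_susceptible (hN : 1 < N) {h : ℝ} (hh0 : 0 < h) (hh1 : h < 1) {σ : Cfg N}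
    {i : V N} (hi : susceptible N h σ i) : H N h (flip N σ i) < H N h σ := by
  refine hi.lt_of_ne fun heq => ?_
  have hzero := sub_eq_zero.2 heq
  rw [H_flip_sub_H hN] at hzero
  set m : ℤ := ∑ j ∈ nbrFinset N i, spin (σ j)
  have hm : (m : ℝ) + h = 0 := by
    simpa [spin_ne_zero] using hzero
  have h1 : (-1 : ℤ) < m := by exact_mod_cast (by linarith : (-1 : ℝ) < m)
  have h2 : m < 0 := by exact_mod_cast (by linarith : (m : ℝ) < 0)
  omega

open scoped Classical in
noncomputable def lowTempRate (h : ℝ) (σ : Cfg N) (i : V N) : ℝ :=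
  if susceptible N h σ i then 1 / (N : ℝ) ^ 2 else 0

lemma tendsto_metroRate (h : ℝ) (σ : Cfg N) (i : V N) :
    Tendsto (metroRate N h · σ i) atTop (𝓝 (lowTempRate h σ i)) := by
  have hrate : lowTempRate h σ i
      = 1 / (N : ℝ) ^ 2 * if H N h (flip N σ i) - H N h σ ≤ 0 then 1 else 0 := by
    by_cases hs : H N h (flip N σ i) ≤ H N h σ <;> simp [lowTempRate, susceptible, hs]
  rw [hrate]
  exact (tendsto_min_one_exp _).const_mul _

lemma Pmat_apply (h : ℝ) (σ η : Cfg N) :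
    Pmat N h σ η = if η = σ then 1 - ∑ i, lowTempRate h σ i
      else ∑ i ∈ univ.filter (flip N σ · = η), lowTempRate h σ i := by
  refine Tendsto.limUnder_eq ?_
  by_cases hη : η = σ <;> simp only [pβ, hη, if_true, if_false]
  · exact tendsto_const_nhds.sub (tendsto_finsetSum _ fun i _ => tendsto_metroRate h σ i)
  · exact tendsto_finsetSum _ fun i _ => tendsto_metroRate h σ i

lemma lowTempRate_nonneg (h : ℝ) (σ : Cfg N) (i : V N) : 0 ≤ lowTempRate h σ i := by
  unfold lowTempRate
  split_ifs <;> positivity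

lemma sum_lowTempRate_le_one (h : ℝ) (σ : Cfg N) : ∑ i, lowTempRate h σ i ≤ 1 := by
  have hN : (N : ℝ) ≠ 0 := Nat.cast_ne_zero.2 (NeZero.ne N)
  calc ∑ i, lowTempRate h σ i ≤ ∑ _i : V N, 1 / (N : ℝ) ^ 2 :=
        sum_le_sum fun i _ => by unfold lowTempRate; split_ifs; exacts [le_rfl, by positivity]
    _ = 1 := by
        simp only [sum_const, card_univ, Fintype.card_prod, ZMod.card, nsmul_eq_mul]
        field_simp
        push_cast
        ring

lemma Pmat_mem_rowStochastic (h : ℝ) : Pmat N h ∈ Matrix.rowStochastic ℝ (Cfg N) := by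
  refine Matrix.mem_rowStochastic_iff_sum.2 ⟨fun σ η => ?_, fun σ => ?_⟩
  · rw [Pmat_apply]
    split_ifs
    · linarith [sum_lowTempRate_le_one h σ]
    · exact sum_nonneg fun i _ => lowTempRate_nonneg h σ i
  · have hflip : ∀ i ∈ univ, flip N σ i ∈ univ.erase σ := fun i _ =>
      mem_erase.2 ⟨fun hi => by simpa [flip] using congrFun hi i, mem_univ _⟩
    have hoff : ∑ η ∈ univ.erase σ, Pmat N h σ η = ∑ i, lowTempRate h σ i := by
      rw [← sum_fiberwise_of_maps_to hflip]
      exact sum_congr rfl fun η hη => by rw [Pmat_apply, if_neg (ne_of_mem_erase hη)]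
    rw [← add_sum_erase _ _ (mem_univ σ), hoff, Pmat_apply, if_pos rfl]
    ring

lemma Pmat_of_robust {h : ℝ} {σ : Cfg N} (hσ : robust N h σ) (η : Cfg N) :
    Pmat N h σ η = if η = σ then 1 else 0 := by
  have hrate : ∀ i, lowTempRate h σ i = 0 := fun i => if_neg (hσ i)
  simp [Pmat_apply, hrate]

lemma mem_Uset {h : ℝ} {σ : Cfg N} : σ ∈ Uset N h ↔ robust N h σ := by
  simp [Uset]

lemma sum_Uset_Pmat_of_mem {h : ℝ} {σ : Cfg N} (hσ : σ ∈ Uset N h) :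
    ∑ η ∈ Uset N h, Pmat N h σ η = 1 := by
  simp [Pmat_of_robust (mem_Uset.1 hσ), hσ]

lemma exists_H_lt_of_not_robust (hN : 1 < N) {h : ℝ} (hh0 : 0 < h) (hh1 : h < 1) {σ : Cfg N}
    (hσ : ¬ robust N h σ) : ∃ τ, H N h τ < H N h σ ∧ 1 / (N : ℝ) ^ 2 ≤ Pmat N h σ τ := by
  obtain ⟨i, hi⟩ := not_forall_not.1 hσ
  refine ⟨flip N σ i, H_flip_lt_of_susceptible hN hh0 hh1 hi, ?_⟩
  have hne : flip N σ i ≠ σ := fun he => by simpa [flip] using congrFun he i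
  rw [Pmat_apply, if_neg hne]
  calc 1 / (N : ℝ) ^ 2 = lowTempRate h σ i := (if_pos hi).symm
    _ ≤ _ := single_le_sum (fun j _ => lowTempRate_nonneg h σ j) (by simp)

/-- the probability that the low-temperature dynamics, started from
any post-decision configuration, is found in a robust configuration after κ steps
tends to 1 as κ → ∞, uniformly in the configuration and the action. -/
theorem robust_mass_to_one (N : ℕ) [NeZero N] (hN : 3 ≤ N)
    (h : ℝ) (hh0 : 0 < h) (hh1 : h < 1) :
    ∀ ε > 0, ∃ K : ℕ, ∀ κ ≥ K, ∀ (σ : Cfg N) (a : Act N),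
      1 - ε ≤ ∑ η ∈ Uset N h, Ptilκ N h κ σ a η := by
  intro ε hε
  have hN1 : (1 : ℝ) ≤ N := by exact_mod_cast NeZero.one_le
  obtain ⟨K, hK⟩ := Matrix.exists_one_sub_le_massIn_of_descent (Pmat_mem_rowStochastic h)
    (fun _ => sum_Uset_Pmat_of_mem) (H N h) (by positivity)
    (div_le_one_of_le₀ (one_le_pow₀ hN1) (by positivity))
    (fun _ hσ => exists_H_lt_of_not_robust (by omega) hh0 hh1 (mt mem_Uset.2 hσ)) hε
  exact ⟨K, fun κ hκ σ a => hK κ hκ (post N σ a)⟩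

end IsingS
end
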